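/- arXiv:math/0603480 — 3 statements merged into one kernel-verified Lean document; each statement's English description precedes it below -/
import Mathlib

section
/- Let φ : V → W be a linear map between finite-dimensional real vector spaces and let L ⊆ W ⊕ W* be a maximal isotropic subspace with respect to the canonical pairing on W ⊕ W*. Then the pull back B_φ(L) := {X + φ*ξ : X ∈ V, ξ ∈ W* with φ(X) + ξ ∈ L} is a maximal isotropic subspace of V ⊕ V* with respect to the canonical pairing on V ⊕ V*. -/
/-- The canonical symmetric pairing on `U ⊕ U*`. -/
noncomputable def pairing {U : Type*} [AddCommGroup U] [Module ℝ U]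
    (p q : U × Module.Dual ℝ U) : ℝ :=
  (1 / 2) * (p.2 q.1 + q.2 p.1)

/-- A subset of `U ⊕ U*` is maximal isotropic when it equals its own orthogonal
complement with respect to the canonical pairing. -/
def IsMaxIsotropic {U : Type*} [AddCommGroup U] [Module ℝ U]
    (L : Set (U × Module.Dual ℝ U)) : Prop :=
  {p : U × Module.Dual ℝ U | ∀ q ∈ L, pairing p q = 0} = L

/-- The pull back `B_φ(L) = {X + φ*ξ : φ(X) + ξ ∈ L}` of a maximal isotropic
`L ⊆ W ⊕ W*` under a linear map `φ : V → W` is a maximal isotropic subspace of `V ⊕ V*`. -/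
theorem stmt_3 {V W : Type*} [AddCommGroup V] [Module ℝ V] [FiniteDimensional ℝ V]
    [AddCommGroup W] [Module ℝ W] [FiniteDimensional ℝ W]
    (φ : V →ₗ[ℝ] W) (L : Set (W × Module.Dual ℝ W)) (hL : IsMaxIsotropic L) :
    IsMaxIsotropic {p : V × Module.Dual ℝ V |
      ∃ (X : V) (ξ : Module.Dual ℝ W), p = (X, φ.dualMap ξ) ∧ (φ X, ξ) ∈ L} := by
  unfold IsMaxIsotropic at hL ⊢
  -- membership criterion for L
  have hmem : ∀ p : W × Module.Dual ℝ W, p ∈ L ↔ ∀ q ∈ L, pairing p q = 0 :=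
    fun p => ⟨fun hp => by rw [← hL] at hp; exact hp, fun hp => by rw [← hL]; exact hp⟩
  -- L is isotropic
  have hiso : ∀ p ∈ L, ∀ q ∈ L, pairing p q = 0 := fun p hp => (hmem p).mp hp
  -- L is a submodule
  let Lsub : Submodule ℝ (W × Module.Dual ℝ W) :=
    { carrier := L
      add_mem' := by
        intro a b ha hb
        rw [hmem] at ha hb ⊢
        intro q hq
        have := ha q hq; have h2 := hb q hq
        simp only [pairing, Prod.fst_add, Prod.snd_add, LinearMap.add_apply, map_add] at *
        linear_combination this + h2
      zero_mem' := by
        rw [hmem]; intro q hq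
        simp [pairing]
      smul_mem' := by
        intro c a ha
        rw [hmem] at ha ⊢
        intro q hq
        have := ha q hq
        simp only [pairing, Prod.smul_fst, Prod.smul_snd, LinearMap.smul_apply, map_smul,
          smul_eq_mul] at *
        linear_combination c * this
      }
  have hLsub : ∀ p, p ∈ Lsub ↔ p ∈ L := fun _ => Iff.rfl
  -- the projection of L to W
  let P : Submodule ℝ W := Lsub.map (LinearMap.fst ℝ W (Module.Dual ℝ W))
  -- L₀ = {γ | (0,γ) ∈ L} equals the annihilator of P
  have hL0 : ∀ γ : Module.Dual ℝ W, (0, γ) ∈ L ↔ γ ∈ P.dualAnnihilator := by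
    intro γ
    rw [Submodule.mem_dualAnnihilator, hmem]
    constructor
    · intro h Z hZ
      obtain ⟨⟨Z', ζ⟩, hq, rfl⟩ := hZ
      have := h _ hq
      simp only [pairing, map_zero, add_zero] at this
      simp only [LinearMap.fst_apply]
      linarith
    · intro h q hq
      have : γ q.1 = 0 := h q.1 ⟨q, hq, rfl⟩
      simp [pairing, this]
  ext p
  simp only [Set.mem_setOf_eq]
  constructor
  · -- hard direction: B⊥ ⊆ B
    intro h
    obtain ⟨Y, β⟩ := p
    -- step 1: φ Y ∈ P
    have hY : φ Y ∈ P := by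
      rw [← Subspace.dualAnnihilator_dualCoannihilator_eq (W := P),
        Submodule.mem_dualCoannihilator]
      intro γ hγ
      have := h ((0 : V), φ.dualMap γ)
        ⟨0, γ, rfl, by rw [map_zero]; exact (hL0 γ).mpr hγ⟩
      simp only [pairing, map_zero, add_zero, LinearMap.dualMap_apply] at this
      linarith
    obtain ⟨⟨Z, η₀⟩, hη₀L, hZ⟩ := hY
    simp only [LinearMap.fst_apply] at hZ
    subst hZ
    -- (φ Y, η₀) ∈ L.  Set α := β - φ* η₀; α annihilates φ⁻¹(P)
    set α : Module.Dual ℝ V := β - φ.dualMap η₀ with hα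
    have hαann : α ∈ (P.comap φ).dualAnnihilator := by
      rw [Submodule.mem_dualAnnihilator]
      intro X hX
      obtain ⟨⟨ZX, ξ⟩, hqL, hq1⟩ := (Submodule.mem_comap.mp hX : φ X ∈ P)
      simp only [LinearMap.fst_apply] at hq1
      -- (φ X, ξ) ∈ L
      subst hq1
      have hφXξ : (φ X, ξ) ∈ L := hqL
      have h1 := h (X, φ.dualMap ξ) ⟨X, ξ, rfl, hφXξ⟩
      have h2 := hiso _ hη₀L _ hφXξ
      simp only [pairing, LinearMap.dualMap_apply] at h1 h2
      simp only [hα, LinearMap.sub_apply, LinearMap.dualMap_apply]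
      linarith
    -- α vanishes on ker φ, hence α = φ* δ
    have hker : LinearMap.ker φ ≤ P.comap φ := by
      intro x hx
      simp only [LinearMap.mem_ker] at hx
      simp [Submodule.mem_comap, hx]
    have hαker : α ∈ (LinearMap.ker φ).dualAnnihilator := by
      rw [Submodule.mem_dualAnnihilator] at hαann ⊢
      exact fun w hw => hαann w (hker hw)
    rw [← LinearMap.range_dualMap_eq_dualAnnihilator_ker] at hαker
    obtain ⟨δ, hδ⟩ := hαker
    -- δ annihilates P ⊓ range φ
    have hδann : δ ∈ (P ⊓ LinearMap.range φ).dualAnnihilator := by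
      rw [Submodule.mem_dualAnnihilator]
      rintro w ⟨hwP, x, rfl⟩
      rw [Submodule.mem_dualAnnihilator] at hαann
      have := hαann x (Submodule.mem_comap.mpr hwP)
      rw [← hδ] at this
      exact this
    rw [Subspace.dualAnnihilator_inf_eq, Submodule.mem_sup] at hδann
    obtain ⟨γ, hγ, ε, hε, hδγε⟩ := hδann
    -- φ* ε = 0
    have hφε : φ.dualMap ε = 0 := by
      ext x
      rw [Submodule.mem_dualAnnihilator] at hε
      exact hε (φ x) ⟨x, rfl⟩
    -- conclude
    refine ⟨Y, η₀ + γ, ?_, ?_⟩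
    · have hβ : β = φ.dualMap (η₀ + γ) := by
        have : φ.dualMap δ = φ.dualMap γ := by
          rw [← hδγε, map_add, hφε, add_zero]
        rw [map_add, ← this, hδ, hα]
        abel
      rw [hβ]
    · have : ((0 : W), γ) ∈ L := (hL0 γ).mpr hγ
      have := Lsub.add_mem (hLsub _ |>.mpr hη₀L) (hLsub _ |>.mpr this)
      simpa using (hLsub _).mp this
  · -- easy direction: B ⊆ B⊥
    rintro ⟨X, ξ, rfl, hXξ⟩ q ⟨X', ξ', rfl, hXξ'⟩
    have := hiso _ hXξ _ hXξ'
    simp only [pairing, LinearMap.dualMap_apply] at this ⊢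
    linarith
end

section
/- Let φ : V → W be a linear map between finite-dimensional real vector spaces and let L' ⊆ V ⊕ V* be a maximal isotropic subspace with respect to the canonical pairing on V ⊕ V*. Then the push forward F_φ(L') := {φ(X) + ξ : X ∈ V, ξ ∈ W* with X + φ*ξ ∈ L'} is a maximal isotropic subspace of W ⊕ W* with respect to the canonical pairing on W ⊕ W*. -/
open Module LinearMap

section Aux

variable {U : Type*} [AddCommGroup U] [Module ℝ U]

/-- The canonical pairing as a bilinear form. -/
noncomputable def Bform (U : Type*) [AddCommGroup U] [Module ℝ U] :
    LinearMap.BilinForm ℝ (U × Module.Dual ℝ U) :=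
  LinearMap.mk₂ ℝ (fun p q => (1 / 2) * (p.2 q.1 + q.2 p.1))
    (by intro p p' q; simp; ring)
    (by intro c p q; simp; ring)
    (by intro p q q'; simp; ring)
    (by intro c p q; simp; ring)

lemma Bform_apply (p q : U × Module.Dual ℝ U) :
    Bform U p q = (1 / 2) * (p.2 q.1 + q.2 p.1) := rfl

lemma Bform_symm (p q : U × Module.Dual ℝ U) : Bform U p q = Bform U q p := by
  simp only [Bform_apply]; ring

lemma Bform_isRefl : (Bform U).IsRefl := fun p q h => by rwa [Bform_symm]

lemma Bform_nondeg [FiniteDimensional ℝ U] : (Bform U).Nondegenerate := by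
  refine (Bform_isRefl (U := U)).nondegenerate_iff_separatingLeft.mpr ?_
  intro p hp
  have h2 : p.2 = 0 := by
    ext y
    have := hp (y, 0)
    simp only [Bform_apply] at this
    simpa using this
  have h1 : p.1 = 0 := by
    rw [← Module.forall_dual_apply_eq_zero_iff ℝ p.1]
    intro g
    have := hp (0, g)
    simp only [Bform_apply] at this
    simpa using this
  exact Prod.ext h1 h2

/-- The orthogonal complement (of a set) as a submodule. -/
noncomputable def orthSub (L : Set (U × Module.Dual ℝ U)) :
    Submodule ℝ (U × Module.Dual ℝ U) where
  carrier := {p | ∀ q ∈ L, pairing p q = 0}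
  zero_mem' := by intro q hq; simp [pairing]
  add_mem' := by
    intro a b ha hb q hq
    have := ha q hq; have := hb q hq
    simp only [pairing] at *
    simp only [Prod.fst_add, Prod.snd_add, LinearMap.add_apply, map_add]
    linarith
  smul_mem' := by
    intro c a ha q hq
    have := ha q hq
    simp only [pairing] at *
    simp only [Prod.smul_fst, Prod.smul_snd, LinearMap.smul_apply, map_smul, smul_eq_mul]
    have he : (1/2:ℝ) * (c * a.2 q.1 + c * q.2 a.1) = c * ((1/2) * (a.2 q.1 + q.2 a.1)) := by ring
    rw [he, this, mul_zero]

lemma orthSub_coe (N : Submodule ℝ (U × Module.Dual ℝ U)) :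
    orthSub (N : Set (U × Module.Dual ℝ U)) = (Bform U).orthogonal N := by
  ext p
  constructor
  · intro h n hn
    have := h n hn
    simp only [pairing] at this
    show Bform U n p = 0
    rw [Bform_symm, Bform_apply]
    exact this
  · intro h q hq
    have : Bform U q p = 0 := h q hq
    rw [Bform_symm, Bform_apply] at this
    exact this

/-- Rank-nullity for the image of a submodule. -/
lemma finrank_map_add_finrank_inf_ker {A B : Type*} [AddCommGroup A] [Module ℝ A]
    [FiniteDimensional ℝ A] [AddCommGroup B] [Module ℝ B]
    (f : A →ₗ[ℝ] B) (p : Submodule ℝ A) :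
    finrank ℝ (p.map f) + finrank ℝ (p ⊓ LinearMap.ker f : Submodule ℝ A) = finrank ℝ p := by
  have h := LinearMap.finrank_range_add_finrank_ker (f.domRestrict p)
  rw [LinearMap.range_domRestrict, LinearMap.ker_domRestrict] at h
  rw [← h]
  congr 1
  rw [← Submodule.finrank_map_subtype_eq p (Submodule.comap p.subtype (LinearMap.ker f)),
    Submodule.map_comap_subtype]

lemma finrank_prod_bot {A B : Type*} [AddCommGroup A] [Module ℝ A]
    [AddCommGroup B] [Module ℝ B] (p : Submodule ℝ A) :
    finrank ℝ (p.prod (⊥ : Submodule ℝ B)) = finrank ℝ p := by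
  rw [← Submodule.map_inl]
  exact (Submodule.equivMapOfInjective _ LinearMap.inl_injective p).finrank_eq.symm

lemma finrank_bot_prod {A B : Type*} [AddCommGroup A] [Module ℝ A]
    [AddCommGroup B] [Module ℝ B] (q : Submodule ℝ B) :
    finrank ℝ ((⊥ : Submodule ℝ A).prod q) = finrank ℝ q := by
  rw [← Submodule.map_inr]
  exact (Submodule.equivMapOfInjective _ LinearMap.inr_injective q).finrank_eq.symm

lemma orthogonal_sup {A : Type*} [AddCommGroup A] [Module ℝ A]
    (B : LinearMap.BilinForm ℝ A) (N P : Submodule ℝ A) :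
    B.orthogonal (N ⊔ P) = B.orthogonal N ⊓ B.orthogonal P := by
  apply le_antisymm
  · exact le_inf (B.orthogonal_le le_sup_left) (B.orthogonal_le le_sup_right)
  · rintro x ⟨hN, hP⟩ n hn
    obtain ⟨y, hy, z, hz, rfl⟩ := Submodule.mem_sup.mp hn
    have h1 : B y x = 0 := hN y hy
    have h2 : B z x = 0 := hP z hz
    show B (y + z) x = 0
    rw [map_add, LinearMap.add_apply, h1, h2, add_zero]

end Aux

set_option maxHeartbeats 2000000 in
/-- The push forward `F_φ(L') = {φ(X) + ξ : X + φ*ξ ∈ L'}` of a maximal isotropic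
`L' ⊆ V ⊕ V*` under a linear map `φ : V → W` is a maximal isotropic subspace of `W ⊕ W*`. -/

theorem stmt_4 {V W : Type*} [AddCommGroup V] [Module ℝ V] [FiniteDimensional ℝ V]
    [AddCommGroup W] [Module ℝ W] [FiniteDimensional ℝ W]
    (φ : V →ₗ[ℝ] W) (L' : Set (V × Module.Dual ℝ V)) (hL' : IsMaxIsotropic L') :
    IsMaxIsotropic {p : W × Module.Dual ℝ W |
      ∃ (X : V) (ξ : Module.Dual ℝ W), p = (φ X, ξ) ∧ (X, φ.dualMap ξ) ∈ L'} := by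
  classical
  set m := finrank ℝ V with hm
  set n := finrank ℝ W with hn
  set M : Submodule ℝ (V × Module.Dual ℝ V) := orthSub L' with hMdef
  have hMset : (M : Set (V × Module.Dual ℝ V)) = L' := hL'
  -- M is its own orthogonal
  have hMo : (Bform V).orthogonal M = M := by
    apply SetLike.ext'
    rw [← orthSub_coe M]
    show {p | ∀ q ∈ (M : Set (V × Module.Dual ℝ V)), pairing p q = 0} = (M : Set _)
    rw [hMset, hL']
  have hdimEV : finrank ℝ (V × Module.Dual ℝ V) = 2 * m := by
    rw [Module.finrank_prod, Subspace.dual_finrank_eq]; ring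
  have hdimEW : finrank ℝ (W × Module.Dual ℝ W) = 2 * n := by
    rw [Module.finrank_prod, Subspace.dual_finrank_eq]; ring
  have hMrank : finrank ℝ M = m := by
    have h1 := LinearMap.BilinForm.finrank_orthogonal Bform_nondeg M
    rw [hMo, hdimEV] at h1
    have h2 : finrank ℝ M ≤ finrank ℝ (V × Module.Dual ℝ V) := Submodule.finrank_le M
    rw [hdimEV] at h2
    omega
  -- The maps α and β
  set α : (V × Module.Dual ℝ W) →ₗ[ℝ] (V × Module.Dual ℝ V) :=
    (LinearMap.id).prodMap φ.dualMap with hα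
  set β : (V × Module.Dual ℝ W) →ₗ[ℝ] (W × Module.Dual ℝ W) :=
    φ.prodMap LinearMap.id with hβ
  set K : Submodule ℝ (V × Module.Dual ℝ W) := M.comap α with hK
  set F : Submodule ℝ (W × Module.Dual ℝ W) := K.map β with hF
  -- The target set is F
  have hFset : {p : W × Module.Dual ℝ W |
      ∃ (X : V) (ξ : Module.Dual ℝ W), p = (φ X, ξ) ∧ (X, φ.dualMap ξ) ∈ L'}
      = (F : Set (W × Module.Dual ℝ W)) := by
    ext p
    constructor
    · rintro ⟨X, ξ, rfl, h⟩
      refine ⟨(X, ξ), ?_, rfl⟩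
      show α (X, ξ) ∈ M
      rw [← hMset] at h
      exact h
    · rintro ⟨⟨X, ξ⟩, hx, rfl⟩
      refine ⟨X, ξ, rfl, ?_⟩
      rw [← hMset]
      exact hx
  -- F is isotropic
  have hFiso : F ≤ (Bform W).orthogonal F := by
    rintro y ⟨b, hb, rfl⟩ x ⟨a, ha, rfl⟩
    have hab : α a ∈ M := ha
    have hbb : α b ∈ (Bform V).orthogonal M := by rw [hMo]; exact hb
    have := hbb (α a) hab
    show Bform W (β a) (β b) = 0
    rw [← this]
    rfl
  -- kernel and range computations
  set S : Submodule ℝ (V × Module.Dual ℝ V) :=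
    (LinearMap.ker φ).prod (⊥ : Submodule ℝ (Module.Dual ℝ V)) with hS
  have hkerα : LinearMap.ker α = (⊥ : Submodule ℝ V).prod (LinearMap.ker φ.dualMap) := by
    rw [hα, LinearMap.ker_prodMap, LinearMap.ker_id]
  have hrangeα : LinearMap.range α = (⊤ : Submodule ℝ V).prod ((LinearMap.ker φ).dualAnnihilator) := by
    ext ⟨x, η⟩
    simp only [LinearMap.mem_range, Submodule.mem_prod, Submodule.mem_top, true_and]
    constructor
    · rintro ⟨⟨a, ξ⟩, h⟩
      rw [hα] at h
      simp only [LinearMap.prodMap_apply, LinearMap.id_apply, Prod.mk.injEq] at h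
      rw [← h.2, ← LinearMap.range_dualMap_eq_dualAnnihilator_ker]
      exact ⟨ξ, rfl⟩
    · intro h
      rw [← LinearMap.range_dualMap_eq_dualAnnihilator_ker] at h
      obtain ⟨ξ, hξ⟩ := h
      exact ⟨(x, ξ), by rw [hα]; simp [hξ]⟩
  have horthS : (Bform V).orthogonal S =
      (⊤ : Submodule ℝ V).prod ((LinearMap.ker φ).dualAnnihilator) := by
    ext ⟨x, η⟩
    simp only [LinearMap.BilinForm.mem_orthogonal_iff, Submodule.mem_prod, Submodule.mem_top,
      true_and, Submodule.mem_dualAnnihilator]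
    constructor
    · intro h y hy
      have := h (y, 0) (by simp [hS, hy])
      simp only [LinearMap.BilinForm.IsOrtho, Bform_apply, LinearMap.zero_apply, zero_add] at this
      linarith
    · rintro h ⟨y, ζ⟩ hyz
      rw [hS, Submodule.mem_prod] at hyz
      obtain ⟨hy, hζ⟩ := hyz
      have hζ0 : ζ = 0 := hζ
      show Bform V (y, ζ) (x, η) = 0
      rw [Bform_apply]
      simp [hζ0, h y hy]
  -- the common intersection piece
  set D : Submodule ℝ V := (M ⊓ S).comap (LinearMap.inl ℝ V (Module.Dual ℝ V)) with hD
  have hMS : (M ⊓ S) = D.map (LinearMap.inl ℝ V (Module.Dual ℝ V)) := by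
    ext ⟨x, η⟩
    constructor
    · intro h
      have hη : η = 0 := h.2.2
      refine ⟨x, ?_, by rw [hη]; rfl⟩
      show (x, (0 : Module.Dual ℝ V)) ∈ M ⊓ S
      rwa [← hη]
    · rintro ⟨y, hy, h⟩
      have : ((y, 0) : V × Module.Dual ℝ V) = (x, η) := h
      rw [← this]
      exact hy
  have hkerβ : LinearMap.ker β = (LinearMap.ker φ).prod (⊥ : Submodule ℝ (Module.Dual ℝ W)) := by
    rw [hβ, LinearMap.ker_prodMap, LinearMap.ker_id]
  have hKkerβ : (K ⊓ LinearMap.ker β) = D.map (LinearMap.inl ℝ V (Module.Dual ℝ W)) := by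
    ext ⟨x, ξ⟩
    rw [hkerβ]
    constructor
    · rintro ⟨hxK, hxk⟩
      have hξ : ξ = 0 := hxk.2
      refine ⟨x, ?_, by rw [hξ]; rfl⟩
      show ((x, 0) : V × Module.Dual ℝ V) ∈ M ⊓ S
      refine ⟨?_, ?_⟩
      · have : α (x, ξ) ∈ M := hxK
        rw [hα] at this
        simp only [LinearMap.prodMap_apply, LinearMap.id_apply] at this
        rw [hξ, map_zero] at this
        exact this
      · exact ⟨hxk.1, rfl⟩
    · rintro ⟨y, hy, h⟩
      have he : ((y, 0) : V × Module.Dual ℝ W) = (x, ξ) := h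
      rw [← he]
      have hy' : ((y, 0) : V × Module.Dual ℝ V) ∈ M ⊓ S := hy
      constructor
      · show α (y, 0) ∈ M
        rw [hα]
        simp only [LinearMap.prodMap_apply, LinearMap.id_apply, map_zero]
        exact hy'.1
      · exact ⟨hy'.2.1, rfl⟩
  -- dimension bookkeeping
  set r := finrank ℝ (LinearMap.range φ) with hr
  set d := finrank ℝ D with hd
  have hrk : r + finrank ℝ (LinearMap.ker φ) = m := LinearMap.finrank_range_add_finrank_ker φ
  have hkerα_rank : finrank ℝ (LinearMap.ker α) = n - r := by
    rw [hkerα, finrank_bot_prod]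
    have h1 : finrank ℝ (LinearMap.range φ.dualMap) + finrank ℝ (LinearMap.ker φ.dualMap)
        = finrank ℝ (Module.Dual ℝ W) := LinearMap.finrank_range_add_finrank_ker φ.dualMap
    rw [LinearMap.finrank_range_dualMap_eq_finrank_range, Subspace.dual_finrank_eq] at h1
    omega
  have hMSrank : finrank ℝ (M ⊓ S : Submodule ℝ (V × Module.Dual ℝ V)) = d := by
    rw [hMS]
    exact (Submodule.equivMapOfInjective _ LinearMap.inl_injective D).finrank_eq.symm
  have hSrank : finrank ℝ S = finrank ℝ (LinearMap.ker φ) := finrank_prod_bot _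
  have hKkerβ_rank : finrank ℝ (K ⊓ LinearMap.ker β : Submodule ℝ (V × Module.Dual ℝ W)) = d := by
    rw [hKkerβ]
    exact (Submodule.equivMapOfInjective _ LinearMap.inl_injective D).finrank_eq.symm
  -- finrank of M ⊓ range α
  have hMrange : M ⊓ LinearMap.range α = (Bform V).orthogonal (M ⊔ S) := by
    rw [orthogonal_sup, hMo, horthS, hrangeα]
  have hsupinf : finrank ℝ (M ⊔ S : Submodule ℝ (V × Module.Dual ℝ V))
      + finrank ℝ (M ⊓ S : Submodule ℝ (V × Module.Dual ℝ V))
      = finrank ℝ M + finrank ℝ S := Submodule.finrank_sup_add_finrank_inf_eq M S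
  have hMrange_rank : finrank ℝ (M ⊓ LinearMap.range α : Submodule ℝ (V × Module.Dual ℝ V))
      = 2 * m - (finrank ℝ (M ⊔ S : Submodule ℝ (V × Module.Dual ℝ V))) := by
    rw [hMrange]
    rw [LinearMap.BilinForm.finrank_orthogonal Bform_nondeg, hdimEV]
  have hsup_le : finrank ℝ (M ⊔ S : Submodule ℝ (V × Module.Dual ℝ V)) ≤ 2 * m := by
    rw [← hdimEV]; exact Submodule.finrank_le _
  -- finrank of K
  have hmapK : K.map α = M ⊓ LinearMap.range α := by rw [Submodule.map_comap_eq, inf_comm]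
  have hKkerα : K ⊓ LinearMap.ker α = LinearMap.ker α := by
    rw [inf_eq_right]
    intro x hx
    show α x ∈ M
    rw [LinearMap.mem_ker] at hx
    rw [hx]
    exact M.zero_mem
  have hKrank : finrank ℝ (M ⊓ LinearMap.range α : Submodule ℝ (V × Module.Dual ℝ V))
      + (n - r) = finrank ℝ K := by
    have := finrank_map_add_finrank_inf_ker α K
    rw [hmapK, hKkerα, hkerα_rank] at this
    exact this
  -- finrank of F
  have hFrank' : finrank ℝ F + d = finrank ℝ K := by
    have := finrank_map_add_finrank_inf_ker β K
    rw [hKkerβ_rank] at this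
    exact this
  have hrn : r ≤ n := by
    rw [hr, hn]
    exact Submodule.finrank_le _
  have hFrank : finrank ℝ F = n := by omega
  -- conclude: F equals its orthogonal
  have horthF : (Bform W).orthogonal F = F := by
    refine (Submodule.eq_of_le_of_finrank_le hFiso ?_).symm
    rw [LinearMap.BilinForm.finrank_orthogonal Bform_nondeg, hdimEW, hFrank]
    omega
  show {p : W × Module.Dual ℝ W | ∀ q ∈ _, pairing p q = 0} = _
  rw [hFset]
  have : orthSub (F : Set (W × Module.Dual ℝ W)) = F := by rw [orthSub_coe, horthF]
  exact congrArg SetLike.coe this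
end

section
/- Let W ⊆ V be a subspace, B := W ⊕ V*, and B^⊥ = {0} ⊕ W°. Let J₁, J₂ : V ⊕ V* → V ⊕ V* be commuting linear maps with J₁² = J₂² = −id, and suppose that the bilinear form (x,y) ↦ ⟨x, J₁J₂(y)⟩ is positive definite on V ⊕ V*. Then B ∩ J₁J₂(B^⊥) = 0; in particular the condition B ∩ J₁J₂(B^⊥) ⊆ B^⊥ holds automatically. -/
/-- If `J₁, J₂` commute, `J₁² = J₂² = -id`, and `(x,y) ↦ ⟨x, J₁J₂ y⟩` is positive definite,
then `B ∩ J₁J₂(B^⊥) = 0`; in particular `B ∩ J₁J₂(B^⊥) ⊆ B^⊥`, where `B = W ⊕ V*` and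
`B^⊥ = 0 ⊕ W°`. -/
theorem stmt_16 {V : Type*} [AddCommGroup V] [Module ℝ V] [FiniteDimensional ℝ V]
    (W : Submodule ℝ V)
    (J₁ J₂ : (V × Module.Dual ℝ V) →ₗ[ℝ] (V × Module.Dual ℝ V))
    (hJ₁ : J₁ ∘ₗ J₁ = -LinearMap.id) (hJ₂ : J₂ ∘ₗ J₂ = -LinearMap.id)
    (hcomm : J₁ ∘ₗ J₂ = J₂ ∘ₗ J₁)
    (hpos : ∀ x : V × Module.Dual ℝ V, x ≠ 0 → 0 < pairing x ((J₁ ∘ₗ J₂) x)) :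
    W.prod ⊤ ⊓ Submodule.map (J₁ ∘ₗ J₂) ((⊥ : Submodule ℝ V).prod W.dualAnnihilator) = ⊥ ∧
    W.prod ⊤ ⊓ Submodule.map (J₁ ∘ₗ J₂) ((⊥ : Submodule ℝ V).prod W.dualAnnihilator)
      ≤ (⊥ : Submodule ℝ V).prod W.dualAnnihilator := by
  have key : W.prod ⊤ ⊓ Submodule.map (J₁ ∘ₗ J₂)
      ((⊥ : Submodule ℝ V).prod W.dualAnnihilator) = ⊥ := by
    rw [eq_bot_iff]
    rintro x ⟨hxB, y, hy, rfl⟩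
    rcases Submodule.mem_prod.mp hy with ⟨hy1, hy2⟩
    rcases Submodule.mem_prod.mp hxB with ⟨hx1, -⟩
    have hy1' : y.1 = 0 := hy1
    have hzero : pairing y ((J₁ ∘ₗ J₂) y) = 0 := by
      have hann : y.2 ((J₁ ∘ₗ J₂) y).1 = 0 :=
        (Submodule.mem_dualAnnihilator _).mp hy2 _ hx1
      simp only [pairing, hy1', LinearMap.comp_apply] at hann ⊢
      simp [hann]
    have hy0 : y = 0 := by
      by_contra h
      exact absurd hzero (ne_of_gt (hpos y h))
    simp [hy0]
  exact ⟨key, key ▸ bot_le⟩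
end
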